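/- Let A be a normed division algebra and let a, b, c, d ∈ Im A. Then ⟨a × b, c × d⟩ = ⟨a,c⟩⟨b,d⟩ − ⟨a,d⟩⟨b,c⟩ − (1/2)⟨a, [b,c,d]⟩, where [b,c,d] = (b*c)*d − b*(c*d) is the associator; in particular, ⟨a × b, a × d⟩ = ‖a‖²⟨b,d⟩ − ⟨a,b⟩⟨a,d⟩. -/

import Mathlib

open scoped RealInnerProductSpace

/-- A normed division algebra: a real inner product space with an `ℝ`-bilinear
multiplication (not necessarily associative or commutative), a two-sided
multiplicative identity `one ≠ 0`, satisfying `‖a*b‖ = ‖a‖ * ‖b‖`. -/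
structure NormedDivisionAlgebra (A : Type*) [NormedAddCommGroup A] [InnerProductSpace ℝ A] where
  mul : A →ₗ[ℝ] A →ₗ[ℝ] A
  one : A
  one_ne_zero : one ≠ 0
  one_mul : ∀ a : A, mul one a = a
  mul_one : ∀ a : A, mul a one = a
  norm_mul : ∀ a b : A, ‖mul a b‖ = ‖a‖ * ‖b‖

namespace NormedDivisionAlgebra

variable {A : Type*} [NormedAddCommGroup A] [InnerProductSpace ℝ A]

/-- `Re a`: the orthogonal projection of `a` onto the real part `Re A = ℝ · 1`. -/
noncomputable def re (D : NormedDivisionAlgebra A) (a : A) : A :=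
  (⟪a, D.one⟫ / ‖D.one‖ ^ 2) • D.one

/-- `Im a`: the orthogonal projection of `a` onto the imaginary part `Im A = (ℝ · 1)ᗮ`. -/
noncomputable def im (D : NormedDivisionAlgebra A) (a : A) : A := a - D.re a

/-- The conjugate `conj a = Re a - Im a`. -/
noncomputable def conj (D : NormedDivisionAlgebra A) (a : A) : A := D.re a - D.im a

/-- The real part `Re A = ℝ · 1` as a submodule. -/
def ReSub (D : NormedDivisionAlgebra A) : Submodule ℝ A := Submodule.span ℝ {D.one}

/-- The imaginary part `Im A = (ℝ · 1)ᗮ` as a submodule. -/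
noncomputable def ImSub (D : NormedDivisionAlgebra A) : Submodule ℝ A := (Submodule.span ℝ {D.one})ᗮ

/-- The commutator `[a, b] = a*b - b*a`. -/
def comm (D : NormedDivisionAlgebra A) (a b : A) : A := D.mul a b - D.mul b a

/-- The associator `[a, b, c] = (a*b)*c - a*(b*c)`. -/
def assoc (D : NormedDivisionAlgebra A) (a b c : A) : A :=
  D.mul (D.mul a b) c - D.mul a (D.mul b c)

/-- The cross product `a × b = Im (a*b)` (intended for `a, b ∈ Im A`). -/
noncomputable def cross (D : NormedDivisionAlgebra A) (a b : A) : A := D.im (D.mul a b)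

end NormedDivisionAlgebra

/-!
Polarizing the composition law `‖x * z‖ = ‖x‖ ‖z‖` gives `⟪x z, x w⟫ = ‖x‖² ⟪z, w⟫` and, polarizing
once more, the exchange identity `⟪a c, b d⟫ + ⟪a d, b c⟫ = 2 ⟪a, b⟫ ⟪c, d⟫`. Taking one of the
factors to be `1` shows that left and right multiplication by an imaginary element are
skew-adjoint and that imaginary elements anticommute up to the real part `-2 ⟪x, y⟫`.
Moving the outer factors of the associator across the inner product turns `⟪a, [b, c, d]⟫`
into `⟪a c, b d⟫ - ⟪a b, c d⟫`, and anticommutation plus one exchange express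
`⟪a b, c d⟫ + ⟪a c, b d⟫` through inner products of `a, b, c, d`.
-/

namespace NormedDivisionAlgebra

variable {A : Type*} [NormedAddCommGroup A] [InnerProductSpace ℝ A] (D : NormedDivisionAlgebra A)

theorem norm_one : ‖D.one‖ = 1 := by
  have h := D.norm_mul D.one D.one
  rw [D.one_mul] at h
  exact (mul_eq_left₀ (norm_ne_zero_iff.mpr D.one_ne_zero)).mp h.symm

theorem inner_one_eq_zero_of_mem_ImSub {x : A} (hx : x ∈ D.ImSub) : ⟪x, D.one⟫ = 0 :=
  Submodule.mem_orthogonal_singleton_iff_inner_left.mp hx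

theorem inner_mul_mul_left (x z w : A) : ⟪D.mul x z, D.mul x w⟫ = ‖x‖ ^ 2 * ⟪z, w⟫ := by
  have polarization (u v : A) : ⟪u, v⟫ = (‖u + v‖ ^ 2 - ‖u‖ ^ 2 - ‖v‖ ^ 2) / 2 := by
    rw [norm_add_sq_real]; ring
  rw [polarization, polarization z, ← map_add, D.norm_mul, D.norm_mul, D.norm_mul]
  ring

theorem inner_mul_mul_add_inner_mul_mul (a b c d : A) :
    ⟪D.mul a c, D.mul b d⟫ + ⟪D.mul a d, D.mul b c⟫ = 2 * ⟪a, b⟫ * ⟪c, d⟫ := by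
  have h := D.inner_mul_mul_left (a + b) c d
  simp only [map_add, LinearMap.add_apply, inner_add_left, inner_add_right, norm_add_sq_real,
    D.inner_mul_mul_left] at h
  linear_combination h + real_inner_comm (D.mul b c) (D.mul a d)

theorem inner_mul_one {y : A} (hy : y ∈ D.ImSub) (x : A) : ⟪D.mul x y, D.one⟫ = -⟪x, y⟫ := by
  have h := D.inner_mul_mul_add_inner_mul_mul x D.one y D.one
  simp only [D.one_mul, D.mul_one] at h
  linear_combination h + 2 * ⟪x, D.one⟫ * D.inner_one_eq_zero_of_mem_ImSub hy

theorem inner_mul_left_eq_neg {u : A} (hu : u ∈ D.ImSub) (x w : A) :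
    ⟪D.mul u x, w⟫ = -⟪x, D.mul u w⟫ := by
  have h := D.inner_mul_mul_add_inner_mul_mul u D.one x w
  simp only [D.one_mul] at h
  linear_combination h + 2 * ⟪x, w⟫ * D.inner_one_eq_zero_of_mem_ImSub hu -
    real_inner_comm x (D.mul u w)

theorem inner_mul_right_eq_neg {u : A} (hu : u ∈ D.ImSub) (x w : A) :
    ⟪D.mul x u, w⟫ = -⟪x, D.mul w u⟫ := by
  have h := D.inner_mul_mul_add_inner_mul_mul x w u D.one
  simp only [D.mul_one] at h
  linear_combination h + 2 * ⟪x, w⟫ * D.inner_one_eq_zero_of_mem_ImSub hu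

theorem mul_self_eq_neg_norm_sq_smul_one {x : A} (hx : x ∈ D.ImSub) :
    D.mul x x = -‖x‖ ^ 2 • D.one := by
  refine ext_inner_right ℝ fun w => ?_
  have h := D.inner_mul_mul_left x w D.one
  rw [D.mul_one] at h
  rw [D.inner_mul_left_eq_neg hx, real_inner_comm, h, real_inner_smul_left, real_inner_comm]
  ring

theorem mul_add_mul_swap {x y : A} (hx : x ∈ D.ImSub) (hy : y ∈ D.ImSub) :
    D.mul x y + D.mul y x = -(2 * ⟪x, y⟫) • D.one := by
  have h := D.mul_self_eq_neg_norm_sq_smul_one (add_mem hx hy)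
  simp only [map_add, LinearMap.add_apply, D.mul_self_eq_neg_norm_sq_smul_one hx,
    D.mul_self_eq_neg_norm_sq_smul_one hy, norm_add_sq_real] at h
  linear_combination (norm := module) h

theorem inner_mul_swap_mul {x y v : A} (hx : x ∈ D.ImSub) (hy : y ∈ D.ImSub) (hv : v ∈ D.ImSub)
    (u : A) : ⟪D.mul y x, D.mul u v⟫ = 2 * ⟪x, y⟫ * ⟪u, v⟫ - ⟪D.mul x y, D.mul u v⟫ := by
  rw [eq_sub_iff_add_eq', ← inner_add_left, D.mul_add_mul_swap hx hy, real_inner_smul_left,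
    real_inner_comm _ D.one, D.inner_mul_one hv]
  ring

theorem cross_eq {y : A} (hy : y ∈ D.ImSub) (x : A) :
    D.cross x y = D.mul x y + ⟪x, y⟫ • D.one := by
  rw [cross, im, re, D.inner_mul_one hy, D.norm_one, one_pow, div_one, neg_smul, sub_neg_eq_add]

theorem inner_cross_cross {y w : A} (hy : y ∈ D.ImSub) (hw : w ∈ D.ImSub) (x z : A) :
    ⟪D.cross x y, D.cross z w⟫ = ⟪D.mul x y, D.mul z w⟫ - ⟪x, y⟫ * ⟪z, w⟫ := by
  rw [D.cross_eq hy, D.cross_eq hw]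
  simp only [inner_add_left, inner_add_right, real_inner_smul_left, real_inner_smul_right,
    D.inner_mul_one hy, real_inner_self_eq_norm_sq, D.norm_one]
  rw [real_inner_comm _ D.one, D.inner_mul_one hw]
  ring

theorem inner_assoc {a b d : A} (ha : a ∈ D.ImSub) (hb : b ∈ D.ImSub) (hd : d ∈ D.ImSub)
    (c : A) : ⟪a, D.assoc b c d⟫ = ⟪D.mul a c, D.mul b d⟫ - ⟪D.mul a b, D.mul c d⟫ := by
  have outer_right : ⟪a, D.mul (D.mul b c) d⟫ = -⟪D.mul a d, D.mul b c⟫ := by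
    rw [D.inner_mul_right_eq_neg hd, neg_neg]
  have outer_left : ⟪a, D.mul b (D.mul c d)⟫ = -⟪D.mul b a, D.mul c d⟫ := by
    rw [real_inner_comm, D.inner_mul_left_eq_neg hb, real_inner_comm]
  rw [assoc, inner_sub_right, outer_right, outer_left, D.inner_mul_swap_mul ha hb hd]
  linear_combination -D.inner_mul_mul_add_inner_mul_mul a b c d

theorem inner_mul_mul_add_inner_mul_mul_middle_swap {a b c d : A} (ha : a ∈ D.ImSub)
    (hb : b ∈ D.ImSub) (hc : c ∈ D.ImSub) (hd : d ∈ D.ImSub) :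
    ⟪D.mul a b, D.mul c d⟫ + ⟪D.mul a c, D.mul b d⟫ =
      2 * (⟪a, b⟫ * ⟪c, d⟫ + ⟪a, c⟫ * ⟪b, d⟫ - ⟪a, d⟫ * ⟪b, c⟫) := by
  have swap_ac := D.inner_mul_swap_mul hc ha hd b
  have swap_ab := D.inner_mul_swap_mul ha hb hd c
  have exchange := D.inner_mul_mul_add_inner_mul_mul c b a d
  linear_combination swap_ac - exchange + real_inner_comm (D.mul b a) (D.mul c d) + swap_ab +
    -2 * ⟪a, d⟫ * real_inner_comm b c + 2 * ⟪b, d⟫ * real_inner_comm a c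

end NormedDivisionAlgebra

theorem nda_inner_cross_cross {A : Type*} [NormedAddCommGroup A] [InnerProductSpace ℝ A]
    (D : NormedDivisionAlgebra A) (a b c d : A)
    (ha : a ∈ D.ImSub) (hb : b ∈ D.ImSub) (hc : c ∈ D.ImSub) (hd : d ∈ D.ImSub) :
    ⟪D.cross a b, D.cross c d⟫ =
        ⟪a, c⟫ * ⟪b, d⟫ - ⟪a, d⟫ * ⟪b, c⟫ - (1 / 2) * ⟪a, D.assoc b c d⟫ ∧
      ⟪D.cross a b, D.cross a d⟫ = ‖a‖ ^ 2 * ⟪b, d⟫ - ⟪a, b⟫ * ⟪a, d⟫ := by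
  constructor
  · rw [D.inner_cross_cross hb hd, D.inner_assoc ha hb hd]
    linear_combination D.inner_mul_mul_add_inner_mul_mul_middle_swap ha hb hc hd / 2
  · rw [D.inner_cross_cross hb hd, D.inner_mul_mul_left]
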